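/- Let G be a group and g, h, x ∈ G, where the commutator is defined by [a,b] = a⁻¹b⁻¹ab. If [g,h] ∈ ⟨⟨x⟩⟩⁺, then [g^n, h^m] ∈ ⟨⟨x⟩⟩⁺ for all integers n, m > 0. -/
import Mathlib


/-- `⟨⟨g⟩⟩⁺`: the set of all non-empty finite products of conjugates of `g`. -/
def conjProdSet {G : Type*} [Group G] (g : G) : Set G :=
  {a | ∃ xs : List G, xs ≠ [] ∧ (xs.map (fun x => x * g * x⁻¹)).prod = a}

/-- The commutator, with the convention `[a,b] = a⁻¹b⁻¹ab`. -/
def com {G : Type*} [Group G] (a b : G) : G := a⁻¹ * b⁻¹ * a * b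

lemma conjProdSet_mul {G : Type*} [Group G] {x a b : G}
    (ha : a ∈ conjProdSet x) (hb : b ∈ conjProdSet x) : a * b ∈ conjProdSet x := by
  obtain ⟨xs, hxs, hx⟩ := ha
  obtain ⟨ys, hys, hy⟩ := hb
  exact ⟨xs ++ ys, by simp [hxs], by simp [← hx, ← hy]⟩

lemma conjProdSet_conj {G : Type*} [Group G] {x a : G} (c : G)
    (ha : a ∈ conjProdSet x) : c * a * c⁻¹ ∈ conjProdSet x := by
  obtain ⟨xs, hxs, hx⟩ := ha
  refine ⟨xs.map (c * ·), by simpa using hxs, ?_⟩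
  rw [← hx]
  clear hx hxs
  induction xs with
  | nil => simp
  | cons y ys ih =>
      simp only [List.map_cons, List.prod_cons] at ih ⊢
      rw [ih]
      group

lemma com_mul_left {G : Type*} [Group G] (a b c : G) :
    com (a * b) c = b⁻¹ * com a c * b⁻¹⁻¹ * com b c := by
  simp only [com]; group

lemma com_mul_right {G : Type*} [Group G] (a b c : G) :
    com a (b * c) = com a c * (c⁻¹ * com a b * c⁻¹⁻¹) := by
  simp only [com]; group

/-- Lemma 4.1(3): if `[g,h] ∈ ⟨⟨x⟩⟩⁺`, then `[gⁿ,hᵐ] ∈ ⟨⟨x⟩⟩⁺` for all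
`n, m > 0`. -/
theorem commutator_pow_mem_of_commutator_mem {G : Type*} [Group G] (g h x : G)
    (hc : com g h ∈ conjProdSet x) (n m : ℕ) (hn : 0 < n) (hm : 0 < m) :
    com (g ^ n) (h ^ m) ∈ conjProdSet x := by
  have key : ∀ k : ℕ, 0 < k → ∀ a : G, com a h ∈ conjProdSet x →
      com a (h ^ k) ∈ conjProdSet x := by
    intro k hk
    induction k with
    | zero => exact absurd hk (lt_irrefl 0)
    | succ k ih =>
        intro a ha
        rcases Nat.eq_zero_or_pos k with hk0 | hkpos
        · subst hk0; simpa using ha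
        · rw [pow_succ, com_mul_right]
          exact conjProdSet_mul ha (conjProdSet_conj _ (ih hkpos a ha))
  have keyg : ∀ k : ℕ, 0 < k → com (g ^ k) h ∈ conjProdSet x := by
    intro k hk
    induction k with
    | zero => exact absurd hk (lt_irrefl 0)
    | succ k ih =>
        rcases Nat.eq_zero_or_pos k with hk0 | hkpos
        · subst hk0; simpa using hc
        · rw [pow_succ, com_mul_left]
          exact conjProdSet_mul (conjProdSet_conj _ (ih hkpos)) hc
  exact key m hm (g ^ n) (keyg n hn)
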